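/- Let (z_1,…,z_N; ρ_1,…,ρ_N) be a discrete image with pairwise distinct pixel locations, and let Ñ ≥ 1 be an integer. Then the set of nonzero-intensity weighted pixels {(z_k, ρ_k) : ρ_k ≠ 0} is invariant under rotation about the origin by 2π/Ñ (i.e. equals {(e^{2πi/Ñ} z_k, ρ_k) : ρ_k ≠ 0}) if and only if μ_{j,l} = 0 for every pair of integers j, l ≥ 0 for which (l − j)/Ñ is not an integer. -/

import Mathlib

/-!
Summing the intensities over each pixel location turns an image into a finitely supported
weight function on `ℂ`; for distinct locations, the set of nonzero weighted pixels is the graph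
of this function on its support, so rotation invariance means that rotating the weight function
leaves it unchanged. The moments depend only on the weight function, and rotating by `ζ`
multiplies `μ_{j,l}` by `ζ ^ j * conj ζ ^ l`, which for a primitive `M`-th root of unity is `1`
exactly when `M ∣ l - j`. Conversely, already the holomorphic moments `μ_{j,0}` determine a finitely
supported weight function: pairing with `∏ (X - t)` over all other atoms isolates the weight at
one point.
-/

open Finset Polynomial ComplexConjugate Function

def pixelSet {ι α R : Type*} [Zero R] (z : ι → α) (ρ : ι → R) : Set (α × R) :=
  {p | ∃ k, ρ k ≠ 0 ∧ p = (z k, ρ k)}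

section FiberSum

variable {ι ι' α R : Type*} [Fintype ι] [Fintype ι'] [DecidableEq α]

def fiberSum [AddCommMonoid R] (z : ι → α) (ρ : ι → R) (c : α) : R :=
  ∑ k with z k = c, ρ k

theorem fiberSum_apply_self [AddCommMonoid R] {z : ι → α} (hz : Injective z) (ρ : ι → R)
    (k : ι) : fiberSum z ρ (z k) = ρ k := by
  have : ({k' | z k' = z k} : Finset ι) = {k} := by ext; simp [hz.eq_iff]
  rw [fiberSum, this, sum_singleton]

theorem exists_eq_of_fiberSum_ne_zero [AddCommMonoid R] {z : ι → α} {ρ : ι → R} {c : α}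
    (h : fiberSum z ρ c ≠ 0) : ∃ k, z k = c := by
  obtain ⟨k, hk, -⟩ := exists_ne_zero_of_sum_ne_zero h
  exact ⟨k, (mem_filter.1 hk).2⟩

theorem mem_pixelSet_iff [AddCommMonoid R] {z : ι → α} (hz : Injective z) (ρ : ι → R)
    {p : α × R} : p ∈ pixelSet z ρ ↔ p.2 ≠ 0 ∧ fiberSum z ρ p.1 = p.2 := by
  constructor
  · rintro ⟨k, hk, rfl⟩
    exact ⟨hk, fiberSum_apply_self hz ρ k⟩
  · rintro ⟨hp, hsum⟩
    obtain ⟨k, hk⟩ := exists_eq_of_fiberSum_ne_zero (hsum ▸ hp)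
    rw [← hk, fiberSum_apply_self hz] at hsum
    exact ⟨k, hsum ▸ hp, Prod.ext hk.symm hsum.symm⟩

theorem pixelSet_eq_iff_fiberSum_eq [AddCommMonoid R] {z : ι → α} {z' : ι' → α}
    (hz : Injective z) (hz' : Injective z') (ρ : ι → R) (ρ' : ι' → R) :
    pixelSet z ρ = pixelSet z' ρ' ↔ fiberSum z ρ = fiberSum z' ρ' := by
  refine ⟨fun h => funext fun c => ?_, fun h => ?_⟩
  · have key : ∀ r : R, r ≠ 0 → (fiberSum z ρ c = r ↔ fiberSum z' ρ' c = r) := fun r hr => by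
      simpa [hr, mem_pixelSet_iff hz, mem_pixelSet_iff hz'] using Set.ext_iff.1 h (c, r)
    rcases eq_or_ne (fiberSum z ρ c) 0 with hc | hc
    · rcases eq_or_ne (fiberSum z' ρ' c) 0 with hc' | hc'
      · rw [hc, hc']
      · exact (key _ hc').2 rfl
    · exact ((key _ hc).1 rfl).symm
  · ext p
    simp only [mem_pixelSet_iff hz, mem_pixelSet_iff hz', h]

theorem sum_mul_eq_sum_fiberSum [Semiring R] (z : ι → α) (ρ : ι → R) (f : α → R)
    {T : Finset α} (hT : ∀ k, z k ∈ T) :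
    ∑ k, f (z k) * ρ k = ∑ c ∈ T, f c * fiberSum z ρ c := by
  rw [← sum_fiberwise_of_maps_to (fun k _ => hT k)]
  refine sum_congr rfl fun c _ => ?_
  rw [fiberSum, mul_sum]
  exact sum_congr rfl fun k hk => by rw [(mem_filter.1 hk).2]

theorem sum_mul_eq_of_fiberSum_eq [Semiring R] {z : ι → α} {z' : ι' → α} {ρ : ι → R}
    {ρ' : ι' → R} (h : fiberSum z ρ = fiberSum z' ρ') (f : α → R) :
    ∑ k, f (z k) * ρ k = ∑ k, f (z' k) * ρ' k := by
  have hT : ∀ k, z k ∈ univ.image z ∪ univ.image z' := by simp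
  have hT' : ∀ k, z' k ∈ univ.image z ∪ univ.image z' := by simp
  rw [sum_mul_eq_sum_fiberSum z ρ f hT, sum_mul_eq_sum_fiberSum z' ρ' f hT', h]

theorem sum_mul_eq_mul_fiberSum [Semiring R] {z : ι → α} (ρ : ι → R) {f : α → R} {c : α}
    (hf : ∀ k, z k ≠ c → f (z k) = 0) : ∑ k, f (z k) * ρ k = f c * fiberSum z ρ c := by
  rw [fiberSum, mul_sum, ← sum_filter_of_ne (p := fun k => z k = c)]
  · exact sum_congr rfl fun k hk => by rw [(mem_filter.1 hk).2]
  · intro k _ hk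
    by_contra hne
    exact hk (by rw [hf k hne, zero_mul])

theorem sum_eval_mul_eq_of_sum_pow_mul_eq [CommSemiring R] {w : ι → R} {a : ι → R}
    {w' : ι' → R} {a' : ι' → R} (h : ∀ j : ℕ, ∑ k, w k ^ j * a k = ∑ k, w' k ^ j * a' k)
    (p : R[X]) : ∑ k, p.eval (w k) * a k = ∑ k, p.eval (w' k) * a' k := by
  induction p using Polynomial.induction_on' with
  | add p q hp hq => simp only [eval_add, add_mul, sum_add_distrib, hp, hq]
  | monomial n c => simp only [eval_monomial, mul_assoc, ← mul_sum, h n]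

theorem fiberSum_eq_of_sum_pow_mul_eq [CommRing R] [IsDomain R] [DecidableEq R]
    {w : ι → R} {a : ι → R} {w' : ι' → R} {a' : ι' → R}
    (h : ∀ j : ℕ, ∑ k, w k ^ j * a k = ∑ k, w' k ^ j * a' k) :
    fiberSum w a = fiberSum w' a' := by
  funext c
  set T := (univ.image w ∪ univ.image w').erase c
  set P : R[X] := ∏ s ∈ T, (X - C s)
  have hroot : ∀ t ∈ T, P.eval t = 0 := fun t ht => by
    rw [eval_prod]
    exact prod_eq_zero ht (by simp)
  have hc : P.eval c ≠ 0 := by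
    rw [eval_prod]
    exact prod_ne_zero_iff.2 fun s hs => by simpa [sub_eq_zero] using (ne_of_mem_erase hs).symm
  have key := sum_eval_mul_eq_of_sum_pow_mul_eq h P
  rw [sum_mul_eq_mul_fiberSum (f := P.eval) (c := c) a fun k hk => hroot _ (by simp [T, hk]),
    sum_mul_eq_mul_fiberSum (f := P.eval) (c := c) a' fun k hk => hroot _ (by simp [T, hk])] at key
  exact mul_left_cancel₀ hc key

end FiberSum

section ComplexMoment

variable {ι ι' : Type*} [Fintype ι] [Fintype ι']

def complexMoment (z : ι → ℂ) (ρ : ι → ℝ) (j l : ℕ) : ℂ :=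
  ∑ k, z k ^ j * conj (z k) ^ l * ρ k

theorem complexMoment_mul_left (ζ : ℂ) (z : ι → ℂ) (ρ : ι → ℝ) (j l : ℕ) :
    complexMoment (fun k => ζ * z k) ρ j l = ζ ^ j * conj ζ ^ l * complexMoment z ρ j l := by
  rw [complexMoment, complexMoment, mul_sum]
  refine sum_congr rfl fun k _ => ?_
  simp only [mul_pow, map_mul]
  ring

theorem fiberSum_ofReal (z : ι → ℂ) (ρ : ι → ℝ) :
    fiberSum z (fun k => (ρ k : ℂ)) = fun c => ((fiberSum z ρ c : ℝ) : ℂ) := by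
  funext c
  simp [fiberSum]

theorem complexMoment_eq_of_fiberSum_eq {z : ι → ℂ} {z' : ι' → ℂ} {ρ : ι → ℝ} {ρ' : ι' → ℝ}
    (h : fiberSum z ρ = fiberSum z' ρ') (j l : ℕ) :
    complexMoment z ρ j l = complexMoment z' ρ' j l :=
  sum_mul_eq_of_fiberSum_eq (by rw [fiberSum_ofReal, fiberSum_ofReal, h]) fun w => w ^ j * conj w ^ l

theorem fiberSum_eq_of_complexMoment_eq {z : ι → ℂ} {z' : ι' → ℂ} {ρ : ι → ℝ} {ρ' : ι' → ℝ}
    (h : ∀ j : ℕ, complexMoment z ρ j 0 = complexMoment z' ρ' j 0) :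
    fiberSum z ρ = fiberSum z' ρ' := by
  have key := fiberSum_eq_of_sum_pow_mul_eq (a := fun k => (ρ k : ℂ)) (a' := fun k => (ρ' k : ℂ))
    fun j => by simpa [complexMoment] using h j
  rw [fiberSum_ofReal, fiberSum_ofReal] at key
  exact funext fun c => by exact_mod_cast congrFun key c

theorem IsPrimitiveRoot.pow_mul_conj_pow_eq_one_iff {ζ : ℂ} {M : ℕ} (hζ : IsPrimitiveRoot ζ M)
    (hM : M ≠ 0) (j l : ℕ) : ζ ^ j * conj ζ ^ l = 1 ↔ (M : ℤ) ∣ (l : ℤ) - j := by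
  rw [← Complex.inv_eq_conj (hζ.norm'_eq_one hM), inv_pow, ← zpow_natCast, ← zpow_natCast,
    ← zpow_neg, ← zpow_add₀ (hζ.ne_zero hM), hζ.zpow_eq_one_iff_dvd, ← sub_eq_add_neg,
    dvd_sub_comm]

theorem pixelSet_mul_left_eq_iff {z : ι → ℂ} (hz : Injective z) (ρ : ι → ℝ) {ζ : ℂ} {M : ℕ}
    (hζ : IsPrimitiveRoot ζ M) (hM : M ≠ 0) :
    pixelSet z ρ = pixelSet (fun k => ζ * z k) ρ ↔
      ∀ j l : ℕ, ¬ (M : ℤ) ∣ (l : ℤ) - j → complexMoment z ρ j l = 0 := by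
  have hrot : Injective (fun k => ζ * z k) := (mul_right_injective₀ (hζ.ne_zero hM)).comp hz
  rw [pixelSet_eq_iff_fiberSum_eq hz hrot]
  constructor
  · intro hW j l hjl
    have h := complexMoment_eq_of_fiberSum_eq hW j l
    rw [complexMoment_mul_left] at h
    by_contra hμ
    exact hjl ((hζ.pow_mul_conj_pow_eq_one_iff hM j l).1 ((mul_eq_right₀ hμ).1 h.symm))
  · intro hμ
    refine fiberSum_eq_of_complexMoment_eq fun j => ?_
    rw [complexMoment_mul_left]
    by_cases hj : (M : ℤ) ∣ ((0 : ℕ) : ℤ) - j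
    · rw [(hζ.pow_mul_conj_pow_eq_one_iff hM j 0).2 hj, one_mul]
    · rw [hμ j 0 hj, mul_zero]

end ComplexMoment

/-- an image (with pairwise distinct pixel locations) has `M`-fold rotation
symmetry about the origin iff `μ_{j,l} = 0` whenever `(l - j)/M` is not an integer. -/
theorem pascal_stmt16 (N : ℕ) (z : Fin N → ℂ) (ρ : Fin N → ℝ)
    (hz : Function.Injective z) (M : ℕ) (hM : 1 ≤ M) :
    ({p : ℂ × ℝ | ∃ k, ρ k ≠ 0 ∧ p = (z k, ρ k)}
        = {p : ℂ × ℝ | ∃ k, ρ k ≠ 0 ∧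
            p = (Complex.exp (2 * Real.pi * Complex.I / (M : ℂ)) * z k, ρ k)})
      ↔ ∀ j l : ℕ, ¬ ((M : ℤ) ∣ ((l : ℤ) - (j : ℤ))) →
          ∑ k, z k ^ j * (starRingEnd ℂ) (z k) ^ l * (ρ k : ℂ) = 0 :=
  pixelSet_mul_left_eq_iff hz ρ (Complex.isPrimitiveRoot_exp M (by omega)) (by omega)
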